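/- The function W¹(u) = sup_{k∈ℕ} liminf_{T→∞} (1/(kT))·∑_{t=1}^{kT} u_t on ℓ^∞ respects the fixed-step catching-up criterion: if there exists k ∈ ℕ such that ∑_{t=1}^{kT} u_t ≥ ∑_{t=1}^{kT} v_t for all T ∈ ℕ, then W¹(u) ≥ W¹(v). -/

import Mathlib

/-! Fix a step `n` of the supremum defining `W1 v`, and let `k` be the catching-up step. Passing to
the subsequence of horizons `n * k * T` can only raise the liminf of the averages of the bounded
sequence `v`; at those horizons the partial sums of `v` are dominated by those of `u`, and `n * k` is
itself one of the steps over which `W1 u` takes its supremum. -/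

open Filter

def Bdd (u : ℕ → ℝ) : Prop := ∃ C : ℝ, ∀ t, |u t| ≤ C

noncomputable def avg (u : ℕ → ℝ) (T : ℕ) : ℝ := (∑ t ∈ Finset.range T, u t) / T

noncomputable def W1 (u : ℕ → ℝ) : ℝ :=
  ⨆ k : ℕ, liminf (fun T : ℕ => avg u ((k + 1) * T)) atTop

namespace Bdd

variable {u : ℕ → ℝ}

lemma comp (hu : Bdd u) (m : ℕ → ℕ) : Bdd (u ∘ m) :=
  let ⟨C, hC⟩ := hu
  ⟨C, fun t => hC (m t)⟩

lemma isBoundedUnder_le (hu : Bdd u) {l : Filter ℕ} : IsBoundedUnder (· ≤ ·) l u :=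
  let ⟨C, hC⟩ := hu
  isBoundedUnder_of ⟨C, fun t => (abs_le.1 (hC t)).2⟩

lemma isBoundedUnder_ge (hu : Bdd u) {l : Filter ℕ} : IsBoundedUnder (· ≥ ·) l u :=
  let ⟨C, hC⟩ := hu
  isBoundedUnder_of ⟨-C, fun t => (abs_le.1 (hC t)).1⟩

lemma avg (hu : Bdd u) : Bdd (avg u) := by
  obtain ⟨C, hC⟩ := hu
  refine ⟨C, fun T => ?_⟩
  rcases Nat.eq_zero_or_pos T with rfl | hT
  · simpa [_root_.avg] using (abs_nonneg _).trans (hC 0)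
  · have hT' : (0 : ℝ) < T := Nat.cast_pos.2 hT
    have hsum : |∑ t ∈ Finset.range T, u t| ≤ T * C :=
      calc |∑ t ∈ Finset.range T, u t| ≤ ∑ t ∈ Finset.range T, |u t| :=
            Finset.abs_sum_le_sum_abs _ _
        _ ≤ ∑ _t ∈ Finset.range T, C := Finset.sum_le_sum fun t _ => hC t
        _ = T * C := by simp
    rw [_root_.avg, abs_div, Nat.abs_cast, div_le_iff₀ hT']
    linarith

lemma liminf_le_liminf_comp (hu : Bdd u) {m : ℕ → ℕ} (hm : Tendsto m atTop atTop) :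
    liminf u atTop ≤ liminf (u ∘ m) atTop :=
  hm.liminf_le_liminf_comp
    (by rw [IsCoboundedUnder, map_map]; exact (hu.comp m).isBoundedUnder_le.isCoboundedUnder_ge)
    hu.isBoundedUnder_ge

end Bdd

lemma liminf_avg_mul_le_W1 {u : ℕ → ℝ} (hu : Bdd u) {n : ℕ} (hn : 0 < n) :
    liminf (fun T => avg u (n * T)) atTop ≤ W1 u := by
  obtain ⟨C, hC⟩ := hu.avg
  have hbdd : BddAbove (Set.range fun k : ℕ => liminf (fun T => avg u ((k + 1) * T)) atTop) := by
    refine ⟨C, ?_⟩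
    rintro _ ⟨k, rfl⟩
    exact liminf_le_of_frequently_le (Frequently.of_forall fun T => (abs_le.1 (hC _)).2)
      (hu.avg.comp _).isBoundedUnder_ge
  obtain ⟨k, rfl⟩ := Nat.exists_eq_add_one.2 hn
  exact le_ciSup hbdd k

theorem stmt_9 (u v : ℕ → ℝ) (hu : Bdd u) (hv : Bdd v)
    (hfix : ∃ k : ℕ, 0 < k ∧ ∀ T : ℕ, 1 ≤ T →
      ∑ t ∈ Finset.range (k * T), v t ≤ ∑ t ∈ Finset.range (k * T), u t) :
    W1 v ≤ W1 u := by
  obtain ⟨k, hk, hle⟩ := hfix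
  refine ciSup_le fun j => ?_
  have hdom : ∀ᶠ T in atTop, avg v ((j + 1) * (k * T)) ≤ avg u ((j + 1) * (k * T)) := by
    filter_upwards [eventually_ge_atTop 1] with T hT
    rw [avg, avg, mul_left_comm]
    exact div_le_div_of_nonneg_right (hle _ (Nat.mul_pos j.succ_pos hT)) (Nat.cast_nonneg _)
  calc liminf (fun T => avg v ((j + 1) * T)) atTop
      ≤ liminf (fun T => avg v ((j + 1) * (k * T))) atTop :=
        (hv.avg.comp _).liminf_le_liminf_comp (tendsto_id.const_mul_atTop' hk)
    _ ≤ liminf (fun T => avg u ((j + 1) * (k * T))) atTop :=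
        liminf_le_liminf hdom (hv.avg.comp _).isBoundedUnder_ge
          (hu.avg.comp _).isBoundedUnder_le.isCoboundedUnder_ge
    _ = liminf (fun T => avg u ((j + 1) * k * T)) atTop := by simp only [mul_assoc]
    _ ≤ W1 u := liminf_avg_mul_le_W1 hu (Nat.mul_pos j.succ_pos hk)
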